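/- arXiv:1009.0704 — 2 statements merged into one kernel-verified Lean document; each statement's English description precedes it below -/
import Mathlib

section
/- For pairwise distinct elements d_1,…,d_c and fixed index l, the partial fraction identity ∑_{i≠l} (1/∏_{i'≠i}(d_i − d_{i'})) · 1/(d_l − d_i) = −(1/∏_{l'≠l}(d_l − d_{l'})) · ∑_{i≠l} 1/(d_l − d_i) holds. -/
/-!
With `w i = ∏_{j ≠ i} (d i - d j)⁻¹` the barycentric weights of the nodes `d i`, `i ≠ l`, the
Lagrange basis gives the partition of unity `∑ w i ∏_{j ≠ i} (X - d j) = 1`. Evaluating at `d l`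
gives `∑ w i / (d l - d i) = 1 / N` with `N = ∏ (d l - d j)`; differentiating before evaluating,
by the logarithmic derivative of the products, gives `∑ w i / (d l - d i) ^ 2 = (∑ 1 / (d l - d i)) / N`.
The `i`-th term of the left-hand side is `-w i / (d l - d i) ^ 2`.
-/

open Finset Polynomial

namespace Lagrange

variable {F : Type*} [Field F] {ι : Type*} [DecidableEq ι] {s : Finset ι} {v : ι → F} {x : F}

theorem sum_C_nodalWeight_mul_nodal_erase (hvs : Set.InjOn v s) (hs : s.Nonempty) :
    ∑ i ∈ s, C (nodalWeight s v i) * nodal (s.erase i) v = 1 := by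
  rw [← sum_basis hvs hs]
  refine sum_congr rfl fun i hi => ?_
  rw [basis_eq_prod_sub_inv_mul_nodal_div hi, nodal_erase_eq_nodal_div hi]

theorem eval_nodal_erase_not_at_node {i : ι} (hi : i ∈ s) (hxi : x ≠ v i) :
    eval x (nodal (s.erase i) v) = eval x (nodal s v) * (x - v i)⁻¹ := by
  rw [nodal_eq_mul_nodal_erase hi, eval_mul, eval_sub, eval_X, eval_C,
    mul_comm (x - v i), mul_inv_cancel_right₀ (sub_ne_zero_of_ne hxi)]

theorem eval_derivative_nodal_not_at_node (hx : ∀ i ∈ s, x ≠ v i) :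
    eval x (derivative (nodal s v)) = eval x (nodal s v) * ∑ i ∈ s, (x - v i)⁻¹ := by
  rw [derivative_nodal, eval_finsetSum, mul_sum]
  exact sum_congr rfl fun i hi => eval_nodal_erase_not_at_node hi (hx i hi)

theorem sum_nodalWeight_mul_inv_sub (hvs : Set.InjOn v s) (hs : s.Nonempty)
    (hx : ∀ i ∈ s, x ≠ v i) :
    ∑ i ∈ s, nodalWeight s v i * (x - v i)⁻¹ = (eval x (nodal s v))⁻¹ := by
  have h := eval_interpolate_not_at_node 1 hx
  rw [interpolate_one hvs hs, eval_one] at h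
  simp only [Pi.one_apply, mul_one] at h
  exact eq_inv_of_mul_eq_one_right h.symm

theorem sum_nodalWeight_mul_inv_sub_sq (hvs : Set.InjOn v s) (hx : ∀ i ∈ s, x ≠ v i) :
    ∑ i ∈ s, nodalWeight s v i * (x - v i)⁻¹ ^ 2 =
      (eval x (nodal s v))⁻¹ * ∑ i ∈ s, (x - v i)⁻¹ := by
  rcases s.eq_empty_or_nonempty with rfl | hs
  · simp
  set S := ∑ i ∈ s, (x - v i)⁻¹
  have hN : eval x (nodal s v) ≠ 0 := eval_nodal_not_at_node hx
  have hderiv : ∑ i ∈ s, nodalWeight s v i * (x - v i)⁻¹ * (S - (x - v i)⁻¹) = 0 := by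
    have h := congrArg (fun p => eval x (derivative p)) (sum_C_nodalWeight_mul_nodal_erase hvs hs)
    simp only [derivative_sum, derivative_C_mul, eval_finsetSum, eval_mul, eval_C,
      derivative_one, eval_zero] at h
    rw [← mul_right_inj' hN, mul_zero, ← h, mul_sum]
    refine sum_congr rfl fun i hi => ?_
    rw [eval_derivative_nodal_not_at_node fun j hj => hx j (mem_of_mem_erase hj),
      eval_nodal_erase_not_at_node hi (hx i hi), sum_erase_eq_sub hi]
    ring
  simp only [mul_sub, sum_sub_distrib, ← sum_mul, sub_eq_zero] at hderiv
  rw [sum_nodalWeight_mul_inv_sub hvs hs hx] at hderiv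
  rw [hderiv]
  exact sum_congr rfl fun i _ => by ring

end Lagrange

theorem stmt4_general {K : Type*} [Field K] (c : ℕ) (d : Fin c → K)
    (hd : Function.Injective d) (l : Fin c) :
    ∑ i ∈ Finset.univ.erase l,
        (∏ i' ∈ Finset.univ.erase i, (d i - d i'))⁻¹ * (d l - d i)⁻¹ =
      -(∏ l' ∈ Finset.univ.erase l, (d l - d l'))⁻¹ *
        ∑ i ∈ Finset.univ.erase l, (d l - d i)⁻¹ := by
  have hx : ∀ i ∈ univ.erase l, d l ≠ d i := fun i hi => hd.ne (ne_of_mem_erase hi).symm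
  rw [← Lagrange.eval_nodal, neg_mul,
    ← Lagrange.sum_nodalWeight_mul_inv_sub_sq hd.injOn hx, ← sum_neg_distrib]
  refine sum_congr rfl fun i hi => ?_
  have hli : l ∈ univ.erase i := mem_erase.2 ⟨(ne_of_mem_erase hi).symm, mem_univ l⟩
  rw [← mul_prod_erase _ _ hli, erase_right_comm, Lagrange.nodalWeight, prod_inv_distrib,
    mul_inv, ← neg_sub (d l) (d i), inv_neg]
  ring

/-- Partial fraction identity: for pairwise distinct `d_1,…,d_c` in a field and a fixed index `l`,
`∑_{i≠l} (1/∏_{i'≠i}(d_i - d_{i'})) · 1/(d_l - d_i)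
  = -(1/∏_{l'≠l}(d_l - d_{l'})) · ∑_{i≠l} 1/(d_l - d_i)`. -/
theorem stmt4 {K : Type*} [Field K] (c : ℕ) (hc : 2 ≤ c) (d : Fin c → K)
    (hd : Function.Injective d) (l : Fin c) :
    ∑ i ∈ Finset.univ.erase l,
        (∏ i' ∈ Finset.univ.erase i, (d i - d i'))⁻¹ * (d l - d i)⁻¹ =
      -(∏ l' ∈ Finset.univ.erase l, (d l - d l'))⁻¹ *
        ∑ i ∈ Finset.univ.erase l, (d l - d i)⁻¹ :=
  stmt4_general c d hd l
end

section
/- The normalized volume of the polytope Q(c,N,(d_i)) defined by α_i ≥ 0 (1 ≤ i ≤ c), β_j ≥ 0 (0 ≤ j ≤ N) inside the affine space { ∑_i d_i α_i = ∑_j β_j, ∑_i α_i = 1 } ⊂ ℝ^{c+N+1} equals ∑_{l=1}^{c} d_l^{c+N−1} / ∏_{l'≠l}(d_l − d_{l'}), where the volume is normalized so that the unit simplex has measure 1. -/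
/-!
Project `Q` onto the coordinates `x = (α_1, …, α_{c-1})`. The image is the corner simplex
`Δ_{c-1} = {x ≥ 0, ∑ x ≤ 1}`, and the fibre over `x` is the corner simplex of size
`L(x) = ∑ d_i α_i`, of volume `L(x)^N / N!`. Here `L` is the affine function on `Δ_{c-1}` with
value `d_i` at the `i`-th vertex, so it remains to show
`(n + p)! ∫_{Δ_n} L^p = p! [d_0, …, d_n] t^{n+p}`, where
`[d_0, …, d_n] v = ∑_l v(d_l) / ∏_{l' ≠ l} (d_l - d_l')` is the divided difference (a case of
the Hermite–Genocchi formula). By induction on `n`: along the last coordinate `L` has slope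
`d_{n-1} - d_n`, so integrating it out gives
`(L_n^{p+1} - L_{n-1}^{p+1}) / ((p + 1)(d_{n-1} - d_n))`, where `L_k` is the interpolant of the
nodes other than `d_k` on `Δ_{n-1}`. By induction this is, up to the factorials,
`([d without d_n] - [d without d_{n-1}]) / (d_{n-1} - d_n) = [d_0, …, d_n]`.
-/

open MeasureTheory

/-- The polytope `Q(c, N, (d_i))` (with `c = c' + 1`), defined by `α_i ≥ 0` and `β_j ≥ 0`
inside the affine space `{∑_i d_i α_i = ∑_j β_j, ∑_i α_i = 1} ⊂ ℝ^{c+N+1}`, written in the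
unimodular affine coordinates `(α_1, …, α_{c-1}, β_1, …, β_N)`; here
`α_c = 1 - ∑_{i<c} α_i` and `β_0 = ∑_i d_i α_i - ∑_{j≥1} β_j` are determined. -/
def QSet (c' N : ℕ) (d : Fin (c' + 1) → ℝ) : Set ((Fin c' → ℝ) × (Fin N → ℝ)) :=
  {p | (∀ i, 0 ≤ p.1 i) ∧ (∀ j, 0 ≤ p.2 j) ∧ (∑ i, p.1 i) ≤ 1 ∧
    0 ≤ (∑ i, d i.castSucc * p.1 i) + d (Fin.last c') * (1 - ∑ i, p.1 i) - ∑ j, p.2 j}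

open Finset
open scoped Nat

section DividedDifference

variable {ι K : Type*} [DecidableEq ι] [Field K]

def divDiff (s : Finset ι) (x v : ι → K) : K :=
  ∑ i ∈ s, v i / ∏ j ∈ s.erase i, (x i - x j)

theorem divDiff_map {κ : Type*} [DecidableEq κ] (s : Finset κ) (e : κ ↪ ι) (x v : ι → K) :
    divDiff (s.map e) x v = divDiff s (x ∘ e) (v ∘ e) := by
  simp only [divDiff, sum_map, ← map_erase, prod_map, Function.comp_apply]

theorem divDiff_comp_succAbove {n : ℕ} (x v : Fin (n + 1) → K) (c : Fin (n + 1)) :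
    divDiff univ (x ∘ c.succAbove) (v ∘ c.succAbove) = divDiff (univ.erase c) x v := by
  rw [← Fin.coe_succAboveEmb, ← divDiff_map, Fin.univ_succAbove n c, erase_cons]

theorem divDiff_erase {s : Finset ι} {x : ι → K} (hx : Set.InjOn x s) (v : ι → K) {b : ι}
    (hb : b ∈ s) :
    divDiff (s.erase b) x v = ∑ i ∈ s, (x i - x b) * (v i / ∏ j ∈ s.erase i, (x i - x j)) := by
  rw [divDiff, ← sum_erase s (a := b) (by simp)]
  refine sum_congr rfl fun i hi => ?_
  obtain ⟨hib, his⟩ := mem_erase.1 hi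
  have hxib : x i - x b ≠ 0 := sub_ne_zero.2 fun h => hib (hx his hb h)
  rw [← mul_prod_erase (s.erase i) _ (mem_erase.2 ⟨Ne.symm hib, hb⟩), erase_right_comm,
    ← mul_div_assoc, mul_div_mul_left _ _ hxib]

theorem divDiff_erase_sub_divDiff_erase {s : Finset ι} {x : ι → K} (hx : Set.InjOn x s)
    (v : ι → K) {a b : ι} (ha : a ∈ s) (hb : b ∈ s) :
    divDiff (s.erase b) x v - divDiff (s.erase a) x v = (x a - x b) * divDiff s x v := by
  rw [divDiff_erase hx v hb, divDiff_erase hx v ha, ← sum_sub_distrib, divDiff, mul_sum]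
  exact sum_congr rfl fun i _ => by ring

end DividedDifference

theorem setIntegral_region_Icc_zero {α : Type*} [MeasurableSpace α] {μ : Measure α} [SFinite μ]
    {s : Set α} (hs : MeasurableSet s) {h : α → ℝ} (hh : Measurable h) {g : ℝ × α → ℝ}
    (hg : IntegrableOn g {p | p.2 ∈ s ∧ p.1 ∈ Set.Icc 0 (h p.2)} (volume.prod μ)) :
    ∫ p in {p | p.2 ∈ s ∧ p.1 ∈ Set.Icc 0 (h p.2)}, g p ∂(volume.prod μ) =
      ∫ x in s, (∫ t in Set.Icc 0 (h x), g (t, x)) ∂μ := by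
  have hR : MeasurableSet {p : ℝ × α | p.2 ∈ s ∧ p.1 ∈ Set.Icc 0 (h p.2)} :=
    (measurable_snd hs).inter
      ((measurableSet_le measurable_const measurable_fst).inter
        (measurableSet_le measurable_fst (hh.comp measurable_snd)))
  rw [← integral_indicator hR, integral_prod_symm _ (hg.integrable_indicator hR),
    ← integral_indicator hs]
  congr 1
  ext x
  by_cases hx : x ∈ s
  · rw [Set.indicator_of_mem hx, ← integral_indicator measurableSet_Icc]
    congr 1
    ext t
    simp [Set.indicator, hx]
  · simp [Set.indicator, hx]

def cornerSimplex (n : ℕ) (r : ℝ) : Set (Fin n → ℝ) :=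
  {x | (∀ i, 0 ≤ x i) ∧ ∑ i, x i ≤ r}

section CornerSimplex

variable {n : ℕ} {r : ℝ}

theorem isClosed_cornerSimplex : IsClosed (cornerSimplex n r) := by
  rw [cornerSimplex, Set.ofPred_and, Set.ofPred_forall]
  exact (isClosed_iInter fun i => isClosed_le continuous_const (continuous_apply i)).inter
    (isClosed_le (by fun_prop) continuous_const)

theorem measurableSet_cornerSimplex : MeasurableSet (cornerSimplex n r) :=
  isClosed_cornerSimplex.measurableSet

theorem isCompact_cornerSimplex : IsCompact (cornerSimplex n r) :=
  isCompact_Icc.of_isClosed_subset isClosed_cornerSimplex fun _ ⟨hx, hs⟩ =>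
    (⟨hx, fun i => (single_le_sum (fun j _ => hx j) (mem_univ i)).trans hs⟩ :
      _ ∈ Set.Icc 0 fun _ => r)

theorem cornerSimplex_zero (hr : 0 ≤ r) : cornerSimplex 0 r = Set.univ := by
  ext; simp [cornerSimplex, hr]

theorem snoc_mem_cornerSimplex_iff {y : Fin n → ℝ} {t : ℝ} :
    (Fin.snoc y t : Fin (n + 1) → ℝ) ∈ cornerSimplex (n + 1) r ↔
      y ∈ cornerSimplex n r ∧ t ∈ Set.Icc 0 (r - ∑ i, y i) := by
  simp only [cornerSimplex, Set.mem_ofPred_eq, Fin.forall_fin_succ', Fin.snoc_castSucc,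
    Fin.snoc_last, Fin.sum_univ_castSucc, Set.mem_Icc]
  constructor
  · rintro ⟨⟨hy, ht⟩, hs⟩
    have : 0 ≤ ∑ i, y i := sum_nonneg fun i _ => hy i
    exact ⟨⟨hy, by linarith⟩, ht, by linarith⟩
  · rintro ⟨⟨hy, -⟩, ht, hs⟩
    exact ⟨⟨hy, ht⟩, by linarith⟩

theorem setIntegral_cornerSimplex_succ {f : (Fin (n + 1) → ℝ) → ℝ}
    (hf : IntegrableOn f (cornerSimplex (n + 1) r)) :
    ∫ x in cornerSimplex (n + 1) r, f x =
      ∫ y in cornerSimplex n r, ∫ t in 0..r - ∑ i, y i, f (Fin.snoc y t) := by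
  set e := MeasurableEquiv.piFinSuccAbove (fun _ : Fin (n + 1) => ℝ) (Fin.last n)
  have he : MeasurePreserving e := volume_preserving_piFinSuccAbove _ _
  have he_symm : ∀ p, e.symm p = Fin.snoc p.2 p.1 := fun p => Fin.insertNth_last' _ _
  obtain ⟨R, hR⟩ : ∃ R : Set (ℝ × (Fin n → ℝ)),
      R = {p | p.2 ∈ cornerSimplex n r ∧ p.1 ∈ Set.Icc 0 (r - ∑ i, p.2 i)} := ⟨_, rfl⟩
  have hpre : cornerSimplex (n + 1) r = e ⁻¹' R := by
    ext x
    rw [hR]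
    rw [Set.mem_preimage, Set.mem_ofPred_eq, ← snoc_mem_cornerSimplex_iff, ← he_symm,
      e.symm_apply_apply]
  have hf' : IntegrableOn (f ∘ e.symm) R := by
    refine (he.integrableOn_comp_preimage e.measurableEmbedding).1 ?_
    rwa [← hpre, Function.comp_assoc, e.symm_comp_self, Function.comp_id]
  calc ∫ x in cornerSimplex (n + 1) r, f x
      = ∫ x in e ⁻¹' R, (f ∘ e.symm) (e x) := by
        rw [← hpre]; simp only [Function.comp_apply, MeasurableEquiv.symm_apply_apply]
    _ = ∫ p in R, (f ∘ e.symm) p := he.setIntegral_preimage_emb e.measurableEmbedding _ _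
    _ = ∫ y in cornerSimplex n r, ∫ t in Set.Icc 0 (r - ∑ i, y i), f (Fin.snoc y t) := by
        subst hR
        have hmeas : Measurable fun y : Fin n → ℝ => r - ∑ i, y i := by fun_prop
        have h := setIntegral_region_Icc_zero (μ := (volume : Measure (Fin n → ℝ)))
          measurableSet_cornerSimplex hmeas hf'
        exact h.trans (by simp only [Function.comp_apply, he_symm])
    _ = _ := setIntegral_congr_fun measurableSet_cornerSimplex fun y hy => by
        rw [integral_Icc_eq_integral_Ioc, ← intervalIntegral.integral_of_le (sub_nonneg.2 hy.2)]

end CornerSimplex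

theorem mul_integral_add_mul_pow (u c s : ℝ) (p : ℕ) :
    c * ∫ t in (0 : ℝ)..s, (u + c * t) ^ p = ((u + c * s) ^ (p + 1) - u ^ (p + 1)) / (p + 1) := by
  rw [← intervalIntegral.integral_const_mul,
    intervalIntegral.integral_eq_sub_of_hasDerivAt (f := fun t => (u + c * t) ^ (p + 1) / (p + 1))]
  · simp only [mul_zero, add_zero, sub_div]
  · intro t _
    refine ((((hasDerivAt_id t).const_mul c).const_add u).pow (p + 1)).div_const
      ((p : ℝ) + 1) |>.congr_deriv ?_
    simp only [id, mul_one, Nat.add_sub_cancel]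
    push_cast
    field_simp
  · exact (by fun_prop : Continuous fun t => c * (u + c * t) ^ p).intervalIntegrable _ _

theorem integral_cornerSimplex_sub_sum_pow (n k : ℕ) {r : ℝ} (hr : 0 ≤ r) :
    ∫ y in cornerSimplex n r, (r - ∑ i, y i) ^ k = k ! * r ^ (n + k) / (n + k)! := by
  induction n generalizing k with
  | zero =>
    simp only [cornerSimplex_zero hr, Measure.restrict_univ, univ_eq_empty, sum_empty, sub_zero,
      integral_const, Measure.real, volume_pi, Measure.pi_univ, prod_empty, ENNReal.toReal_one,
      smul_eq_mul, one_mul, zero_add]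
    field_simp
  | succ n ih =>
    have hinner : ∀ y : Fin n → ℝ, ∫ t in (0 : ℝ)..r - ∑ i, y i,
        (r - ∑ i, (Fin.snoc y t : Fin (n + 1) → ℝ) i) ^ k = (r - ∑ i, y i) ^ (k + 1) / (k + 1) := by
      intro y
      have h := mul_integral_add_mul_pow (r - ∑ i, y i) (-1) (r - ∑ i, y i) k
      simp only [Fin.sum_snoc, show ∀ t, r - (∑ i, y i + t) = r - ∑ i, y i + -1 * t by
        intro; ring]
      linear_combination -h
    rw [setIntegral_cornerSimplex_succ ((by fun_prop : Continuous fun y : Fin (n + 1) → ℝ =>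
      (r - ∑ i, y i) ^ k).continuousOn.integrableOn_compact isCompact_cornerSimplex)]
    simp only [hinner]
    rw [integral_div, ih, show n + 1 + k = n + (k + 1) by omega, Nat.factorial_succ k]
    push_cast
    field_simp

theorem volume_cornerSimplex (n : ℕ) {r : ℝ} (hr : 0 ≤ r) :
    volume (cornerSimplex n r) = ENNReal.ofReal (r ^ n / n !) := by
  have h := integral_cornerSimplex_sub_sum_pow n 0 hr
  simp only [pow_zero, setIntegral_const, smul_eq_mul, mul_one, Nat.factorial_zero,
    Nat.cast_one, one_mul, add_zero] at h
  rw [← h, Measure.real, ENNReal.ofReal_toReal isCompact_cornerSimplex.measure_lt_top.ne]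

/-- The affine function on `cornerSimplex n 1` with value `d i` at the vertex `Pi.single i 1` and
`d (Fin.last n)` at the origin; in the coordinates of `QSet` it is `∑ i, d i * α i`. -/
def vertexInterp {n : ℕ} (d : Fin (n + 1) → ℝ) (x : Fin n → ℝ) : ℝ :=
  (∑ i, d i.castSucc * x i) + d (Fin.last n) * (1 - ∑ i, x i)

theorem continuous_vertexInterp {n : ℕ} (d : Fin (n + 1) → ℝ) : Continuous (vertexInterp d) := by
  unfold vertexInterp; fun_prop

theorem vertexInterp_nonneg {n : ℕ} {d : Fin (n + 1) → ℝ} (hd : ∀ l, 0 ≤ d l) {x : Fin n → ℝ}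
    (hx : x ∈ cornerSimplex n 1) : 0 ≤ vertexInterp d x :=
  add_nonneg (sum_nonneg fun i _ => mul_nonneg (hd _) (hx.1 i))
    (mul_nonneg (hd _) (sub_nonneg.2 hx.2))

section Recursion

variable {n : ℕ} (d : Fin (n + 2) → ℝ)

theorem vertexInterp_snoc (y : Fin n → ℝ) (t : ℝ) :
    vertexInterp d (Fin.snoc y t) =
      vertexInterp (d ∘ (Fin.last n).castSucc.succAbove) y +
        (d (Fin.last n).castSucc - d (Fin.last (n + 1))) * t := by
  simp only [vertexInterp, Fin.sum_univ_castSucc, Fin.snoc_castSucc, Fin.snoc_last,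
    Function.comp_apply, Fin.succAbove_of_castSucc_lt _ _ (Fin.castSucc_lt_castSucc_iff.2
      (Fin.castSucc_lt_last _)), Fin.succAbove_ne_last_last (Fin.castSucc_ne_last _)]
  ring

theorem vertexInterp_comp_succAbove_add (y : Fin n → ℝ) :
    vertexInterp (d ∘ (Fin.last n).castSucc.succAbove) y +
        (d (Fin.last n).castSucc - d (Fin.last (n + 1))) * (1 - ∑ i, y i) =
      vertexInterp (d ∘ (Fin.last (n + 1)).succAbove) y := by
  simp only [vertexInterp, Function.comp_apply, Fin.succAbove_last,
    Fin.succAbove_of_castSucc_lt _ _ (Fin.castSucc_lt_castSucc_iff.2 (Fin.castSucc_lt_last _)),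
    Fin.succAbove_ne_last_last (Fin.castSucc_ne_last _)]
  ring

theorem sub_mul_integral_vertexInterp_pow (p : ℕ) :
    (d (Fin.last n).castSucc - d (Fin.last (n + 1))) *
        (((p : ℝ) + 1) * ∫ x in cornerSimplex (n + 1) 1, vertexInterp d x ^ p) =
      (∫ y in cornerSimplex n 1, vertexInterp (d ∘ (Fin.last (n + 1)).succAbove) y ^ (p + 1)) -
        ∫ y in cornerSimplex n 1,
          vertexInterp (d ∘ (Fin.last n).castSucc.succAbove) y ^ (p + 1) := by
  have hint : ∀ {m : ℕ} (e : Fin (m + 1) → ℝ) (k : ℕ),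
      IntegrableOn (fun y => vertexInterp e y ^ k) (cornerSimplex m 1) :=
    fun e k => ((continuous_vertexInterp e).pow k).continuousOn.integrableOn_compact
      isCompact_cornerSimplex
  rw [setIntegral_cornerSimplex_succ (hint d p), ← integral_sub (hint _ _) (hint _ _),
    ← integral_const_mul, ← integral_const_mul]
  congr 1
  ext y
  have h := mul_integral_add_mul_pow (vertexInterp (d ∘ (Fin.last n).castSucc.succAbove) y)
    (d (Fin.last n).castSucc - d (Fin.last (n + 1))) (1 - ∑ i, y i) p
  rw [vertexInterp_comp_succAbove_add, eq_div_iff (by positivity)] at h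
  simp only [vertexInterp_snoc]
  linear_combination h

end Recursion

theorem factorial_mul_integral_vertexInterp_pow (n p : ℕ) (d : Fin (n + 1) → ℝ)
    (hd : Function.Injective d) :
    ((n + p)! : ℝ) * ∫ x in cornerSimplex n 1, vertexInterp d x ^ p =
      p ! * divDiff univ d (fun l => d l ^ (n + p)) := by
  induction n generalizing p with
  | zero =>
    simp [cornerSimplex_zero zero_le_one, vertexInterp, divDiff, Measure.real, volume_pi]
  | succ n ih =>
    have hab : d (Fin.last n).castSucc - d (Fin.last (n + 1)) ≠ 0 :=
      sub_ne_zero.2 (hd.ne (Fin.castSucc_lt_last _).ne)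
    have ih_last : ((n + (p + 1))! : ℝ) *
        ∫ y in cornerSimplex n 1, vertexInterp (d ∘ (Fin.last (n + 1)).succAbove) y ^ (p + 1) =
          (p + 1)! * divDiff (univ.erase (Fin.last (n + 1))) d (fun l => d l ^ (n + (p + 1))) := by
      rw [← divDiff_comp_succAbove]
      exact ih (p + 1) _ (hd.comp Fin.succAbove_right_injective)
    have ih_castSucc : ((n + (p + 1))! : ℝ) *
        ∫ y in cornerSimplex n 1, vertexInterp (d ∘ (Fin.last n).castSucc.succAbove) y ^ (p + 1) =
          (p + 1)! *
            divDiff (univ.erase (Fin.last n).castSucc) d (fun l => d l ^ (n + (p + 1))) := by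
      rw [← divDiff_comp_succAbove]
      exact ih (p + 1) _ (hd.comp Fin.succAbove_right_injective)
    have hrec := divDiff_erase_sub_divDiff_erase hd.injOn (fun l => d l ^ (n + (p + 1)))
      (mem_univ (Fin.last n).castSucc) (mem_univ (Fin.last (n + 1)))
    have hfact : ((p + 1)! : ℝ) = (p + 1) * p ! := by push_cast [Nat.factorial_succ]; ring
    refine mul_left_cancel₀ (mul_ne_zero hab (Nat.cast_add_one_ne_zero p)) ?_
    rw [show n + 1 + p = n + (p + 1) by omega]
    linear_combination ((n + (p + 1))! : ℝ) * sub_mul_integral_vertexInterp_pow d p +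
      ih_last - ih_castSucc + ((p + 1)! : ℝ) * hrec +
      (d (Fin.last n).castSucc - d (Fin.last (n + 1))) *
        divDiff univ d (fun l => d l ^ (n + (p + 1))) * hfact

section QSet

variable {c' N : ℕ} (d : Fin (c' + 1) → ℝ)

theorem measurableSet_QSet : MeasurableSet (QSet c' N d) := by
  unfold QSet; measurability

theorem mk_preimage_QSet_of_mem {x : Fin c' → ℝ} (hx : x ∈ cornerSimplex c' 1) :
    Prod.mk x ⁻¹' QSet c' N d = cornerSimplex N (vertexInterp d x) := by
  ext β
  simp [QSet, cornerSimplex, vertexInterp, hx.1, hx.2]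

theorem mk_preimage_QSet_of_notMem {x : Fin c' → ℝ} (hx : x ∉ cornerSimplex c' 1) :
    Prod.mk x ⁻¹' QSet c' N d = ∅ :=
  Set.eq_empty_of_forall_notMem fun _ ⟨h1, _, h3, _⟩ => hx ⟨h1, h3⟩

theorem volume_QSet (hd : ∀ l, 0 ≤ d l) :
    volume (QSet c' N d) =
      ∫⁻ x in cornerSimplex c' 1, ENNReal.ofReal (vertexInterp d x ^ N / N !) := by
  rw [Measure.volume_eq_prod, Measure.prod_apply (measurableSet_QSet d),
    ← lintegral_indicator measurableSet_cornerSimplex]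
  congr 1
  ext x
  by_cases hx : x ∈ cornerSimplex c' 1
  · rw [mk_preimage_QSet_of_mem d hx, Set.indicator_of_mem hx,
      volume_cornerSimplex N (vertexInterp_nonneg hd hx)]
  · rw [mk_preimage_QSet_of_notMem d hx, Set.indicator_of_notMem hx, measure_empty]

end QSet

/-- The normalized volume (unit simplex has measure `1`, i.e. `(c+N-1)!` times Lebesgue
measure in unimodular coordinates) of the polytope `Q(c,N,(d_i))` equals
`∑_{l=1}^{c} d_l^{c+N-1} / ∏_{l'≠l} (d_l - d_{l'})`.  Here `c = c' + 1 ≥ 1`. -/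
theorem stmt5 (c' N : ℕ) (d : Fin (c' + 1) → ℝ) (hd : Function.Injective d)
    (hpos : ∀ l, 0 < d l) :
    (Nat.factorial (c' + N) : ℝ) * (volume (QSet c' N d)).toReal =
      ∑ l : Fin (c' + 1), d l ^ (c' + N) / ∏ l' ∈ Finset.univ.erase l, (d l - d l') := by
  have hnonneg : ∀ x ∈ cornerSimplex c' 1, 0 ≤ vertexInterp d x ^ N / N ! :=
    fun x hx => by have := vertexInterp_nonneg (fun l => (hpos l).le) hx; positivity
  have hint : IntegrableOn (fun x => vertexInterp d x ^ N / N !) (cornerSimplex c' 1) :=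
    (((continuous_vertexInterp d).pow N).div_const _).continuousOn.integrableOn_compact
      isCompact_cornerSimplex
  rw [volume_QSet d fun l => (hpos l).le, ← ofReal_integral_eq_lintegral_ofReal hint
      ((ae_restrict_iff' measurableSet_cornerSimplex).2 (ae_of_all _ hnonneg)),
    ENNReal.toReal_ofReal (setIntegral_nonneg measurableSet_cornerSimplex hnonneg),
    integral_div, ← mul_div_assoc, factorial_mul_integral_vertexInterp_pow c' N d hd,
    mul_div_cancel_left₀ _ (by positivity)]
  rfl
end
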